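/- arXiv:2203.04984 — 2 statements merged into one kernel-verified Lean document; each statement's English description precedes it below -/
import Mathlib

section
/- If a POVM {M_a} admits a dual frame {M̃_a} with all M̃_a positive semidefinite, then in general this forces strong constraints; specifically, prove: for the Pauli-6 POVM on ℂ², the canonical dual frame (obtained via the Moore–Penrose pseudo-inverse of the Gram matrix) contains elements that are not positive semidefinite. -/
open Matrix
open scoped ComplexOrder

noncomputable def upX : Fin 2 → ℂ := ![(1 : ℂ)/Real.sqrt 2, (1 : ℂ)/Real.sqrt 2]
noncomputable def dnX : Fin 2 → ℂ := ![(1 : ℂ)/Real.sqrt 2, -((1 : ℂ)/Real.sqrt 2)]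
noncomputable def upY : Fin 2 → ℂ := ![(1 : ℂ)/Real.sqrt 2, Complex.I/Real.sqrt 2]
noncomputable def dnY : Fin 2 → ℂ := ![(1 : ℂ)/Real.sqrt 2, -(Complex.I/Real.sqrt 2)]
noncomputable def upZ : Fin 2 → ℂ := ![1, 0]
noncomputable def dnZ : Fin 2 → ℂ := ![0, 1]

noncomputable def pauli6 : Fin 6 → Matrix (Fin 2) (Fin 2) ℂ :=
  ![ (1/3 : ℂ) • vecMulVec upX (star upX),
     (1/3 : ℂ) • vecMulVec dnX (star dnX),
     (1/3 : ℂ) • vecMulVec upY (star upY),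
     (1/3 : ℂ) • vecMulVec dnY (star dnY),
     (1/3 : ℂ) • vecMulVec upZ (star upZ),
     (1/3 : ℂ) • vecMulVec dnZ (star dnZ) ]

/-- The Gram matrix of the Pauli-6 POVM (its entries are real). -/
noncomputable def pauli6Gram : Matrix (Fin 6) (Fin 6) ℝ :=
  fun a b => ((pauli6 a * pauli6 b).trace).re

/-!
The effects satisfy M₀ + M₁ = M₂ + M₃ = M₄ + M₅ = 1/3 and otherwise span the Hermitian
matrices, so the Gram matrix has rank 4 and an explicit pseudo-inverse. The Penrose
conditions determine the pseudo-inverse uniquely, so it is enough to verify them for that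
candidate. The dual element belonging to M₄ = |0⟩⟨0|/3 is then
(M₀ + M₁ + M₂ + M₃)/2 + 5 M₄ - 4 M₅ = diag(2, -1), which has a negative diagonal entry.
-/

section MoorePenrose

variable {n R : Type*} [Fintype n] [CommSemiring R] {G X Y : Matrix n n R}

theorem Matrix.mul_eq_mul_of_penrose_left (hX1 : G * X * G = G) (hX3 : (G * X)ᵀ = G * X)
    (hY1 : G * Y * G = G) (hY3 : (G * Y)ᵀ = G * Y) : G * X = G * Y :=
  calc G * X = Xᵀ * Gᵀ := by rw [← transpose_mul, hX3]
    _ = Xᵀ * (G * Y * G)ᵀ := by rw [hY1]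
    _ = Xᵀ * Gᵀ * (G * Y)ᵀ := by rw [transpose_mul, mul_assoc]
    _ = G * X * (G * Y) := by rw [← transpose_mul, hX3, hY3]
    _ = G * Y := by rw [← mul_assoc, hX1]

theorem Matrix.mul_eq_mul_of_penrose_right (hX1 : G * X * G = G) (hX4 : (X * G)ᵀ = X * G)
    (hY1 : G * Y * G = G) (hY4 : (Y * G)ᵀ = Y * G) : X * G = Y * G :=
  calc X * G = Gᵀ * Xᵀ := by rw [← transpose_mul, hX4]
    _ = (G * Y * G)ᵀ * Xᵀ := by rw [hY1]
    _ = (Y * G)ᵀ * (Gᵀ * Xᵀ) := by rw [mul_assoc G, transpose_mul, mul_assoc]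
    _ = Y * G * (X * G) := by rw [← transpose_mul, hX4, hY4]
    _ = Y * G := by rw [mul_assoc, ← mul_assoc G, hX1]

theorem Matrix.eq_of_penrose (hX1 : G * X * G = G) (hX2 : X * G * X = X)
    (hX3 : (G * X)ᵀ = G * X) (hX4 : (X * G)ᵀ = X * G)
    (hY1 : G * Y * G = G) (hY2 : Y * G * Y = Y)
    (hY3 : (G * Y)ᵀ = G * Y) (hY4 : (Y * G)ᵀ = Y * G) : X = Y :=
  calc X = X * G * X := hX2.symm
    _ = Y * G * Y := by
      rw [mul_eq_mul_of_penrose_right hX1 hX4 hY1 hY4, mul_assoc,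
        mul_eq_mul_of_penrose_left hX1 hX3 hY1 hY3, ← mul_assoc]
    _ = Y := hY2

end MoorePenrose

theorem pauli6_eq : pauli6 = ![!![1/6, 1/6; 1/6, 1/6], !![1/6, -1/6; -1/6, 1/6],
    !![1/6, -Complex.I/6; Complex.I/6, 1/6], !![1/6, Complex.I/6; -Complex.I/6, 1/6],
    !![1/3, 0; 0, 0], !![0, 0; 0, 1/3]] := by
  have hs : (Real.sqrt 2 : ℂ) ^ 2 = 2 := by
    rw [← Complex.ofReal_pow, Real.sq_sqrt zero_le_two]; norm_num
  ext a i j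
  fin_cases a <;> fin_cases i <;> fin_cases j <;>
    simp [pauli6, vecMulVec, upX, dnX, upY, dnY, upZ, dnZ] <;> field_simp <;> simp [hs] <;> ring

theorem pauli6Gram_eq : pauli6Gram =
    !![1/9, 0, 1/18, 1/18, 1/18, 1/18;
       0, 1/9, 1/18, 1/18, 1/18, 1/18;
       1/18, 1/18, 1/9, 0, 1/18, 1/18;
       1/18, 1/18, 0, 1/9, 1/18, 1/18;
       1/18, 1/18, 1/18, 1/18, 1/9, 0;
       1/18, 1/18, 1/18, 1/18, 0, 1/9] := by
  ext a b
  fin_cases a <;> fin_cases b <;>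
    simp [pauli6Gram, pauli6_eq, trace, Fin.sum_univ_two] <;> norm_num

noncomputable def pauli6GramPinv : Matrix (Fin 6) (Fin 6) ℝ :=
  !![5, -4, 1/2, 1/2, 1/2, 1/2;
     -4, 5, 1/2, 1/2, 1/2, 1/2;
     1/2, 1/2, 5, -4, 1/2, 1/2;
     1/2, 1/2, -4, 5, 1/2, 1/2;
     1/2, 1/2, 1/2, 1/2, 5, -4;
     1/2, 1/2, 1/2, 1/2, -4, 5]

-- `1 - pauli6GramProj` is the orthogonal projection onto the kernel of the Gram matrix,
-- the vectors (a, a, b, b, c, c) with a + b + c = 0.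
noncomputable def pauli6GramProj : Matrix (Fin 6) (Fin 6) ℝ :=
  !![2/3, -1/3, 1/6, 1/6, 1/6, 1/6;
     -1/3, 2/3, 1/6, 1/6, 1/6, 1/6;
     1/6, 1/6, 2/3, -1/3, 1/6, 1/6;
     1/6, 1/6, -1/3, 2/3, 1/6, 1/6;
     1/6, 1/6, 1/6, 1/6, 2/3, -1/3;
     1/6, 1/6, 1/6, 1/6, -1/3, 2/3]

theorem pauli6Gram_mul_pauli6GramPinv : pauli6Gram * pauli6GramPinv = pauli6GramProj := by
  rw [pauli6Gram_eq]
  ext i j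
  fin_cases i <;> fin_cases j <;>
    simp [pauli6GramPinv, pauli6GramProj, mul_apply, Fin.sum_univ_six] <;> norm_num

theorem pauli6GramPinv_mul_pauli6Gram : pauli6GramPinv * pauli6Gram = pauli6GramProj := by
  rw [pauli6Gram_eq]
  ext i j
  fin_cases i <;> fin_cases j <;>
    simp [pauli6GramPinv, pauli6GramProj, mul_apply, Fin.sum_univ_six] <;> norm_num

theorem pauli6GramProj_mul_pauli6Gram : pauli6GramProj * pauli6Gram = pauli6Gram := by
  rw [pauli6Gram_eq]
  ext i j
  fin_cases i <;> fin_cases j <;>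
    simp [pauli6GramProj, mul_apply, Fin.sum_univ_six] <;> norm_num

theorem pauli6GramProj_mul_pauli6GramPinv : pauli6GramProj * pauli6GramPinv = pauli6GramPinv := by
  ext i j
  fin_cases i <;> fin_cases j <;>
    simp [pauli6GramPinv, pauli6GramProj, mul_apply, Fin.sum_univ_six] <;> norm_num

theorem transpose_pauli6GramProj : pauli6GramProjᵀ = pauli6GramProj := by
  ext i j
  fin_cases i <;> fin_cases j <;> simp [pauli6GramProj]

theorem sum_pauli6GramPinv_four_smul_pauli6 :
    ∑ a, (pauli6GramPinv 4 a : ℂ) • pauli6 a = !![2, 0; 0, -1] := by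
  ext i j
  fin_cases i <;> fin_cases j <;>
    simp [pauli6_eq, pauli6GramPinv, Fin.sum_univ_six, Matrix.sum_apply] <;> ring

/-- The canonical dual frame of the Pauli-6 POVM, built from the Moore–Penrose
pseudo-inverse of its Gram matrix, contains elements that are not positive
semidefinite. -/
theorem stmt_9 (Tp : Matrix (Fin 6) (Fin 6) ℝ)
    (h1 : pauli6Gram * Tp * pauli6Gram = pauli6Gram)
    (h2 : Tp * pauli6Gram * Tp = Tp)
    (h3 : (pauli6Gram * Tp)ᵀ = pauli6Gram * Tp)
    (h4 : (Tp * pauli6Gram)ᵀ = Tp * pauli6Gram) :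
    ∃ a, ¬ (∑ a', (Tp a a' : ℂ) • pauli6 a').PosSemidef := by
  have hTp : Tp = pauli6GramPinv :=
    eq_of_penrose h1 h2 h3 h4
      (by rw [pauli6Gram_mul_pauli6GramPinv, pauli6GramProj_mul_pauli6Gram])
      (by rw [pauli6GramPinv_mul_pauli6Gram, pauli6GramProj_mul_pauli6GramPinv])
      (by rw [pauli6Gram_mul_pauli6GramPinv, transpose_pauli6GramProj])
      (by rw [pauli6GramPinv_mul_pauli6Gram, transpose_pauli6GramProj])
  refine ⟨4, fun hpsd => ?_⟩
  have hdiag := hpsd.diag_nonneg (i := 1)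
  rw [hTp, sum_pauli6GramPinv_four_smul_pauli6] at hdiag
  norm_num at hdiag
end

section
/- (Tsirelson bound) For any Hermitian operators A₀, A₁ on ℂ^m and B₀, B₁ on ℂ^n with A_i² = 1 and B_j² = 1, the operator norm of the CHSH operator S = A₀⊗B₀ + A₀⊗B₁ + A₁⊗B₀ − A₁⊗B₁ is at most 2√2. -/
open Matrix Kronecker
open scoped Matrix.Norms.L2Operator

lemma kron_conjT {m n : ℕ} (A : Matrix (Fin m) (Fin m) ℂ) (B : Matrix (Fin n) (Fin n) ℂ) :
    (A ⊗ₖ B)ᴴ = Aᴴ ⊗ₖ Bᴴ := by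
  ext ⟨i,j⟩ ⟨k,l⟩
  simp [conjTranspose_apply, kroneckerMap_apply, mul_comm]

lemma norm_one_le_one (k : Type*) [Fintype k] [DecidableEq k] :
    ‖(1 : Matrix k k ℂ)‖ ≤ 1 := by
  rw [Matrix.cstar_norm_def, _root_.map_one, ContinuousLinearMap.one_def]
  exact ContinuousLinearMap.norm_id_le

lemma norm_le_one_of_invol {k : Type*} [Fintype k] [DecidableEq k] (M : Matrix k k ℂ)
    (hM : M.IsHermitian) (h2 : M * M = 1) : ‖M‖ ≤ 1 := by
  have hsq : ‖M‖ * ‖M‖ = ‖star M * M‖ := (CStarRing.norm_star_mul_self).symm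
  rw [Matrix.star_eq_conjTranspose, hM.eq, h2] at hsq
  have h1 := norm_one_le_one k
  nlinarith [norm_nonneg M]

lemma aux8 {E : Type*} [NormedAddCommGroup E] (o u1 u2 u3 u4 : E)
    (ho : ‖o‖ ≤ 4) (h1 : ‖u1‖ ≤ 1) (h2 : ‖u2‖ ≤ 1) (h3 : ‖u3‖ ≤ 1) (h4 : ‖u4‖ ≤ 1) :
    ‖o - u1 + u2 + u3 - u4‖ ≤ 8 := by
  have a := norm_sub_le (o - u1 + u2 + u3) u4
  have b := norm_add_le (o - u1 + u2) u3
  have c := norm_add_le (o - u1) u2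
  have d := norm_sub_le o u1
  linarith

set_option maxHeartbeats 1000000 in
/-- Tsirelson's bound: the CHSH operator built from Hermitian involutions has
operator norm at most 2√2. -/
theorem stmt_14 {m n : ℕ}
    (A₀ A₁ : Matrix (Fin m) (Fin m) ℂ) (B₀ B₁ : Matrix (Fin n) (Fin n) ℂ)
    (hA₀ : A₀.IsHermitian) (hA₁ : A₁.IsHermitian)
    (hB₀ : B₀.IsHermitian) (hB₁ : B₁.IsHermitian)
    (hA₀sq : A₀ * A₀ = 1) (hA₁sq : A₁ * A₁ = 1)
    (hB₀sq : B₀ * B₀ = 1) (hB₁sq : B₁ * B₁ = 1) :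
    ‖toEuclideanCLM (𝕜 := ℂ)
        (A₀ ⊗ₖ B₀ + A₀ ⊗ₖ B₁ + A₁ ⊗ₖ B₀ - A₁ ⊗ₖ B₁)‖ ≤ 2 * Real.sqrt 2 := by
  rw [← Matrix.cstar_norm_def]
  set S : Matrix (Fin m × Fin n) (Fin m × Fin n) ℂ :=
    A₀ ⊗ₖ B₀ + A₀ ⊗ₖ B₁ + A₁ ⊗ₖ B₀ - A₁ ⊗ₖ B₁ with hSdef
  -- Kronecker factors are Hermitian involutions
  have hkherm : ∀ (A : Matrix (Fin m) (Fin m) ℂ) (B : Matrix (Fin n) (Fin n) ℂ),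
      A.IsHermitian → B.IsHermitian → (A ⊗ₖ B).IsHermitian := by
    intro A B hA hB
    unfold Matrix.IsHermitian
    rw [kron_conjT, hA.eq, hB.eq]
  have hksq : ∀ (A : Matrix (Fin m) (Fin m) ℂ) (B : Matrix (Fin n) (Fin n) ℂ),
      A * A = 1 → B * B = 1 → (A ⊗ₖ B) * (A ⊗ₖ B) = 1 := by
    intro A B hA hB
    rw [← Matrix.mul_kronecker_mul, hA, hB, Matrix.one_kronecker_one]
  -- S is Hermitian
  have hSherm : Sᴴ = S := by
    rw [hSdef]
    simp only [conjTranspose_add, conjTranspose_sub, kron_conjT,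
      hA₀.eq, hA₁.eq, hB₀.eq, hB₁.eq]
  -- Key algebraic identity
  have hSS : S * S = ((1 : Matrix (Fin m × Fin n) (Fin m × Fin n) ℂ) + 1 + 1 + 1)
      - (A₀ * A₁) ⊗ₖ (B₀ * B₁) + (A₀ * A₁) ⊗ₖ (B₁ * B₀)
      + (A₁ * A₀) ⊗ₖ (B₀ * B₁) - (A₁ * A₀) ⊗ₖ (B₁ * B₀) := by
    rw [hSdef]
    simp only [add_mul, mul_add, sub_mul, mul_sub, ← Matrix.mul_kronecker_mul,
      hA₀sq, hA₁sq, hB₀sq, hB₁sq, Matrix.one_kronecker_one]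
    abel
  -- norms of the four cross terms
  have hbound : ∀ (X Y : Matrix (Fin m) (Fin m) ℂ) (Z W : Matrix (Fin n) (Fin n) ℂ),
      X.IsHermitian → Y.IsHermitian → Z.IsHermitian → W.IsHermitian →
      X * X = 1 → Y * Y = 1 → Z * Z = 1 → W * W = 1 →
      ‖(X * Y) ⊗ₖ (Z * W)‖ ≤ 1 := by
    intro X Y Z W hX hY hZ hW hX2 hY2 hZ2 hW2
    have h : (X * Y) ⊗ₖ (Z * W) = (X ⊗ₖ Z) * (Y ⊗ₖ W) := Matrix.mul_kronecker_mul _ _ _ _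
    rw [h]
    calc ‖(X ⊗ₖ Z) * (Y ⊗ₖ W)‖ ≤ ‖X ⊗ₖ Z‖ * ‖Y ⊗ₖ W‖ := norm_mul_le _ _
      _ ≤ 1 * 1 :=
          mul_le_mul (norm_le_one_of_invol _ (hkherm _ _ hX hZ) (hksq _ _ hX2 hZ2))
            (norm_le_one_of_invol _ (hkherm _ _ hY hW) (hksq _ _ hY2 hW2))
            (norm_nonneg _) zero_le_one
      _ = 1 := one_mul 1
  have hb1 := hbound A₀ A₁ B₀ B₁ hA₀ hA₁ hB₀ hB₁ hA₀sq hA₁sq hB₀sq hB₁sq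
  have hb2 := hbound A₀ A₁ B₁ B₀ hA₀ hA₁ hB₁ hB₀ hA₀sq hA₁sq hB₁sq hB₀sq
  have hb3 := hbound A₁ A₀ B₀ B₁ hA₁ hA₀ hB₀ hB₁ hA₁sq hA₀sq hB₀sq hB₁sq
  have hb4 := hbound A₁ A₀ B₁ B₀ hA₁ hA₀ hB₁ hB₀ hA₁sq hA₀sq hB₁sq hB₀sq
  have hnormSS : ‖S * S‖ ≤ 8 := by
    rw [hSS]
    refine aux8 _ _ _ _ _ ?_ hb1 hb2 hb3 hb4
    have t1 := norm_add_le ((1 : Matrix (Fin m × Fin n) (Fin m × Fin n) ℂ) + 1 + 1) 1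
    have t2 := norm_add_le ((1 : Matrix (Fin m × Fin n) (Fin m × Fin n) ℂ) + 1) 1
    have t3 := norm_add_le (1 : Matrix (Fin m × Fin n) (Fin m × Fin n) ℂ) 1
    have h1 := norm_one_le_one (Fin m × Fin n)
    linarith
  clear hSdef
  clear_value S
  have hsq : ‖S‖ * ‖S‖ = ‖star S * S‖ := (CStarRing.norm_star_mul_self).symm
  rw [Matrix.star_eq_conjTranspose, hSherm] at hsq
  have h8 : ‖S‖ * ‖S‖ ≤ 8 := hsq ▸ hnormSS
  have hs2 : Real.sqrt 2 * Real.sqrt 2 = 2 := Real.mul_self_sqrt (by norm_num)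
  nlinarith [norm_nonneg S, Real.sqrt_nonneg 2]
end
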